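/- With the setup of the previous statement ($e$ a unit vector, $X$ diagonal with eigenvalues $\mu_i$ of weights $\gamma_i = \sum_{j:\lambda_j=\mu_i}|e_j|^2$, $a = \langle e, Xe\rangle$, $Y = \tilde X - cc^*/a$ the Schur complement), one has $\frac{\chi_Y(z)}{\chi_X(z)} = \frac{1}{a}\Big(z\sum_{i=1}^l \frac{\gamma_i}{z-\mu_i} - 1\Big) = \frac{1}{a}\sum_{i=1}^l \frac{\gamma_i \mu_i}{z - \mu_i}$, using $\sum_i \gamma_i = 1$ and $\frac{z\gamma_i}{z-\mu_i} - \gamma_i = \frac{\gamma_i\mu_i}{z-\mu_i}$; in particular the eigenvalues of $Y$ interlace with those of $X$ in the sense that $\chi_Y/\chi_X$ has a partial fraction expansion with nonnegative coefficients $\gamma_i\mu_i/a$. -/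

import Mathlib

open Matrix Finset
open scoped Classical

/-- The equivalence `Unit ⊕ Fin n ≃ Fin (n+1)` sending `inl` to `0` and `inr i` to `i.succ`. -/
def stmt15Equiv (n : ℕ) : Unit ⊕ Fin n ≃ Fin (n+1) where
  toFun x := Sum.elim (fun _ => 0) Fin.succ x
  invFun j := Fin.cases (Sum.inl ()) (fun i => Sum.inr i) j
  left_inv x := by cases x <;> simp
  right_inv j := by cases j using Fin.cases <;> simp

/-- With the setup of the rank-one compression (diagonal positive `X`, unitary `U` with
first column `e`, `A = U* X U = [[a, c*],[c, X̃]]`, `Y = X̃ - cc*/a` the Schur complement,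
`γ_i = ∑_{j : λ_j = ν_i} |e_j|²`), for `z` not an eigenvalue of `X`:
`χ_Y(z)/χ_X(z) = (1/a)(z ∑ γ_i/(z-ν_i) - 1) = (1/a) ∑ γ_i ν_i/(z-ν_i)`. -/
theorem stmt15 (n l : ℕ) (lam : Fin (n + 1) → ℝ) (hlam : ∀ j, 0 < lam j)
    (ν : Fin l → ℝ) (hν : StrictMono ν) (hvals : ∀ j, ∃ i, lam j = ν i)
    (e : Fin (n + 1) → ℂ) (he : ∑ j, ‖e j‖ ^ 2 = 1)
    (U : Matrix (Fin (n + 1)) (Fin (n + 1)) ℂ)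
    (hU : U ∈ Matrix.unitaryGroup (Fin (n + 1)) ℂ)
    (hcol : ∀ j, U j 0 = e j)
    (γ : Fin l → ℝ)
    (hγ : ∀ i, γ i = ∑ j ∈ Finset.univ.filter fun j => lam j = ν i, ‖e j‖ ^ 2)
    (A : Matrix (Fin (n + 1)) (Fin (n + 1)) ℂ)
    (hA : A = star U * Matrix.diagonal (fun j => (lam j : ℂ)) * U)
    (Y : Matrix (Fin n) (Fin n) ℂ)
    (hY : ∀ i j : Fin n, Y i j = A i.succ j.succ - A i.succ 0 * star (A j.succ 0) / A 0 0) :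
    ∀ z : ℂ, (∀ j, z ≠ (lam j : ℂ)) →
      (z • (1 : Matrix (Fin n) (Fin n) ℂ) - Y).det /
            (z • (1 : Matrix (Fin (n + 1)) (Fin (n + 1)) ℂ)
              - Matrix.diagonal (fun j => (lam j : ℂ))).det
          = (1 / A 0 0) * (z * (∑ i, (γ i : ℂ) / (z - (ν i : ℂ))) - 1) ∧
        (z • (1 : Matrix (Fin n) (Fin n) ℂ) - Y).det /
            (z • (1 : Matrix (Fin (n + 1)) (Fin (n + 1)) ℂ)
              - Matrix.diagonal (fun j => (lam j : ℂ))).det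
          = (1 / A 0 0) * ∑ i, (γ i : ℂ) * (ν i : ℂ) / (z - (ν i : ℂ)) := by
  intro z hz
  have hUU : star U * U = 1 := hU.1
  have hUU' : U * star U = 1 := hU.2
  set D : Matrix (Fin (n+1)) (Fin (n+1)) ℂ := Matrix.diagonal (fun j => (lam j : ℂ)) with hD
  set B : Matrix (Fin (n+1)) (Fin (n+1)) ℂ := z • 1 - A with hB
  -- the diagonal resolvent
  have hzD : z • (1 : Matrix (Fin (n+1)) (Fin (n+1)) ℂ) - D
      = Matrix.diagonal (fun j => z - (lam j : ℂ)) := by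
    ext i j
    by_cases h : i = j <;> simp [hD, Matrix.diagonal, Matrix.one_apply, h]
  have hBD : B = star U * (z • 1 - D) * U := by
    rw [hB, hA]
    rw [Matrix.mul_sub, Matrix.sub_mul, Matrix.mul_smul, Matrix.smul_mul, Matrix.mul_one, hUU]
  -- determinant of the resolvent of X
  have hdetzD : (z • (1 : Matrix (Fin (n+1)) (Fin (n+1)) ℂ) - D).det
      = ∏ j, (z - (lam j : ℂ)) := by rw [hzD, Matrix.det_diagonal]
  have hdetzD_ne : (z • (1 : Matrix (Fin (n+1)) (Fin (n+1)) ℂ) - D).det ≠ 0 := by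
    rw [hdetzD]
    exact Finset.prod_ne_zero_iff.mpr fun j _ => sub_ne_zero.mpr (hz j)
  have hdetB : B.det = (z • (1 : Matrix (Fin (n+1)) (Fin (n+1)) ℂ) - D).det := by
    rw [hBD, Matrix.det_mul, Matrix.det_mul]
    have : (star U).det * U.det = 1 := by rw [← Matrix.det_mul, hUU, Matrix.det_one]
    calc (star U).det * (z • 1 - D).det * U.det
        = (star U).det * U.det * (z • 1 - D).det := by ring
      _ = (z • 1 - D).det := by rw [this, one_mul]
  have hdetB_ne : B.det ≠ 0 := by rw [hdetB]; exact hdetzD_ne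
  -- inverse of B
  set W : Matrix (Fin (n+1)) (Fin (n+1)) ℂ :=
    star U * Matrix.diagonal (fun j => (z - (lam j : ℂ))⁻¹) * U with hW
  have hBW : B * W = 1 := by
    rw [hBD, hW, hzD]
    calc star U * Matrix.diagonal (fun j => z - (lam j : ℂ)) * U *
          (star U * Matrix.diagonal (fun j => (z - (lam j : ℂ))⁻¹) * U)
        = star U * (Matrix.diagonal (fun j => z - (lam j : ℂ)) * (U * star U) *
            Matrix.diagonal (fun j => (z - (lam j : ℂ))⁻¹)) * U := by
          simp only [Matrix.mul_assoc]
      _ = star U * (Matrix.diagonal (fun j => z - (lam j : ℂ)) *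
            Matrix.diagonal (fun j => (z - (lam j : ℂ))⁻¹)) * U := by rw [hUU', Matrix.mul_one]
      _ = star U * U := by
          rw [Matrix.diagonal_mul_diagonal]
          congr 1
          have : (fun j => (z - (lam j : ℂ)) * (z - (lam j : ℂ))⁻¹) = fun _ => (1:ℂ) := by
            funext j
            exact mul_inv_cancel₀ (sub_ne_zero.mpr (hz j))
          rw [this, Matrix.diagonal_one, Matrix.mul_one]
      _ = 1 := hUU
  have hBinv : B⁻¹ = W := Matrix.inv_eq_right_inv hBW
  -- the value W 0 0
  have hestar : ∀ k, star (e k) * e k = ((‖e k‖ ^ 2 : ℝ) : ℂ) := by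
    intro k
    rw [Complex.star_def]
    calc (starRingEnd ℂ) (e k) * e k = e k * (starRingEnd ℂ) (e k) := by ring
      _ = (Complex.normSq (e k) : ℂ) := Complex.mul_conj _
      _ = ((‖e k‖ ^ 2 : ℝ) : ℂ) := by rw [Complex.normSq_eq_norm_sq]
  have hW00 : W 0 0 = ∑ j, ((‖e j‖ ^ 2 : ℝ) : ℂ) * (z - (lam j : ℂ))⁻¹ := by
    have h1 : W 0 0 = ∑ k, star (U k 0) * (z - (lam k : ℂ))⁻¹ * U k 0 := by
      rw [hW, Matrix.mul_apply]
      refine Finset.sum_congr rfl fun k _ => ?_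
      rw [Matrix.mul_diagonal]
      rfl
    rw [h1]
    refine Finset.sum_congr rfl fun k _ => ?_
    rw [hcol k]
    calc star (e k) * (z - (lam k : ℂ))⁻¹ * e k
        = star (e k) * e k * (z - (lam k : ℂ))⁻¹ := by ring
      _ = ((‖e k‖ ^ 2 : ℝ) : ℂ) * (z - (lam k : ℂ))⁻¹ := by rw [hestar]
  -- the value of a = A 0 0
  have haval : A 0 0 = ((∑ j, lam j * ‖e j‖ ^ 2 : ℝ) : ℂ) := by
    have h1 : A 0 0 = ∑ k, star (U k 0) * (lam k : ℂ) * U k 0 := by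
      rw [hA, Matrix.mul_apply]
      refine Finset.sum_congr rfl fun k _ => ?_
      rw [Matrix.mul_diagonal]
      rfl
    rw [h1]
    push_cast
    refine Finset.sum_congr rfl fun k _ => ?_
    rw [hcol k]
    calc star (e k) * (lam k : ℂ) * e k = star (e k) * e k * (lam k : ℂ) := by ring
      _ = ((‖e k‖ ^ 2 : ℝ) : ℂ) * (lam k : ℂ) := by rw [hestar]
      _ = (lam k : ℂ) * ((‖e k‖ : ℂ)) ^ 2 := by push_cast; ring
  have ha_ne : A 0 0 ≠ 0 := by
    rw [haval]
    have hpos : (0 : ℝ) < ∑ j, lam j * ‖e j‖ ^ 2 := by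
      have hex : ∃ j : Fin (n+1), 0 < ‖e j‖ ^ 2 := by
        by_contra hcon
        push_neg at hcon
        have : ∑ j, ‖e j‖ ^ 2 ≤ 0 := Finset.sum_nonpos fun j _ => hcon j
        linarith
      obtain ⟨j, hj⟩ := hex
      refine Finset.sum_pos' (fun k _ => mul_nonneg (hlam k).le (by positivity)) ⟨j, Finset.mem_univ j, ?_⟩
      exact mul_pos (hlam j) hj
    exact_mod_cast ne_of_gt (by exact_mod_cast hpos)
  -- fiber map
  have hg : ∀ j, ∃ i, lam j = ν i := hvals
  set g : Fin (n+1) → Fin l := fun j => (hg j).choose with hgdef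
  have hgspec : ∀ j, lam j = ν (g j) := fun j => (hg j).choose_spec
  have hfiber : ∀ i : Fin l, (Finset.univ.filter fun j => lam j = ν i)
      = Finset.univ.filter fun j => g j = i := by
    intro i
    ext j
    simp only [Finset.mem_filter, Finset.mem_univ, true_and]
    constructor
    · intro h; exact hν.injective (by rw [← hgspec j, h])
    · intro h; rw [hgspec j, h]
  -- the resolvent sum identity
  have hm : ∑ j, ((‖e j‖ ^ 2 : ℝ) : ℂ) * (z - (lam j : ℂ))⁻¹
      = ∑ i, (γ i : ℂ) / (z - (ν i : ℂ)) := by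
    rw [← Finset.sum_fiberwise_of_maps_to (g := g)
      (fun j _ => Finset.mem_univ (g j)) (fun j => ((‖e j‖ ^ 2 : ℝ) : ℂ) * (z - (lam j : ℂ))⁻¹)]
    refine Finset.sum_congr rfl fun i _ => ?_
    rw [hγ i, hfiber i, div_eq_mul_inv]
    push_cast
    rw [Finset.sum_mul]
    refine Finset.sum_congr rfl fun j hj => ?_
    have hji : g j = i := (Finset.mem_filter.mp hj).2
    rw [← hji, ← hgspec j]
  have hγsum : ∑ i, (γ i : ℂ) = 1 := by
    have hr : ∑ i, γ i = (1 : ℝ) := by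
      rw [← he, ← Finset.sum_fiberwise_of_maps_to (g := g)
        (fun j _ => Finset.mem_univ (g j)) (fun j => ‖e j‖ ^ 2)]
      refine Finset.sum_congr rfl fun i _ => ?_
      rw [hγ i, hfiber i]
    exact_mod_cast congrArg (fun x : ℝ => (x : ℂ)) hr
  -- N, the minor
  set N : Matrix (Fin n) (Fin n) ℂ := B.submatrix Fin.succ Fin.succ with hN
  -- hermitian property of A
  have hDH : Dᴴ = D := by
    ext i j
    rw [Matrix.conjTranspose_apply, hD]
    by_cases h : j = i
    · subst h; simp [Matrix.diagonal_apply_eq, Complex.star_def, Complex.conj_ofReal]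
    · simp [Matrix.diagonal_apply_ne' _ h, Matrix.diagonal_apply_ne _ h]
  have hAH : Aᴴ = A := by
    rw [hA]
    rw [Matrix.conjTranspose_mul, Matrix.conjTranspose_mul, hDH,
      Matrix.star_eq_conjTranspose, Matrix.conjTranspose_conjTranspose, Matrix.mul_assoc]
  have hherm : ∀ j : Fin n, A 0 j.succ = star (A j.succ 0) := by
    intro j
    conv_lhs => rw [← hAH]
    rw [Matrix.conjTranspose_apply]
  -- entries of B
  have hB00 : B 0 0 = z - A 0 0 := by simp [hB, Matrix.one_apply]
  have hBsucc0 : ∀ i : Fin n, B i.succ 0 = -(A i.succ 0) := by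
    intro i
    simp [hB, Matrix.one_apply, Fin.succ_ne_zero]
  have hB0succ : ∀ j : Fin n, B 0 j.succ = -(A 0 j.succ) := by
    intro j
    simp [hB, Matrix.one_apply, (Fin.succ_ne_zero j).symm]
  have hNij : ∀ i j : Fin n, N i j = z * (if i = j then 1 else 0) - A i.succ j.succ := by
    intro i j
    simp [hN, hB, Matrix.one_apply, Fin.succ_inj]
  -- the minor via updateRow with a basis vector
  have hE : (B.updateRow 0 (Pi.single 0 1)).det = N.det := by
    have hsub : (B.updateRow 0 (Pi.single 0 1)).submatrix (stmt15Equiv n) (stmt15Equiv n)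
        = fromBlocks (Matrix.of fun _ _ => (1 : ℂ)) 0
            (Matrix.of fun i _ => B i.succ 0) N := by
      ext i j
      cases i with
      | inl u =>
        cases j with
        | inl v =>
          simp [stmt15Equiv, Matrix.updateRow_self]
        | inr j =>
          simp [stmt15Equiv, Matrix.updateRow_self, Pi.single_eq_of_ne (Fin.succ_ne_zero j) _]
      | inr i =>
        cases j with
        | inl v =>
          simp [stmt15Equiv, Matrix.updateRow_ne (Fin.succ_ne_zero i)]
        | inr j =>
          simp [stmt15Equiv, hN, Matrix.updateRow_ne (Fin.succ_ne_zero i)]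
    rw [← Matrix.det_submatrix_equiv_self (stmt15Equiv n), hsub, Matrix.det_fromBlocks_zero₁₂]
    have : (Matrix.of fun _ _ => (1 : ℂ) : Matrix Unit Unit ℂ).det = 1 := by
      rw [Matrix.det_unique]; rfl
    rw [this, one_mul]
  -- det N = det B * W 0 0
  have hdetN : N.det = B.det * W 0 0 := by
    have h1 : W 0 0 = (B.det)⁻¹ * B.adjugate 0 0 := by
      rw [← hBinv, Matrix.inv_def, Matrix.smul_apply, Ring.inverse_eq_inv', smul_eq_mul]
    rw [h1, Matrix.adjugate_apply, hE]
    field_simp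
  -- the row-splitting of det B
  set r2 : Fin (n+1) → ℂ := fun j => B 0 j - z * (Pi.single 0 1 : Fin (n+1) → ℂ) j with hr2
  have hrow : z • (Pi.single 0 1 : Fin (n+1) → ℂ) + r2 = B 0 := by
    funext j
    simp [hr2, Pi.smul_apply, smul_eq_mul]
  have hsplit : B.det = z * (B.updateRow 0 (Pi.single 0 1)).det + (B.updateRow 0 r2).det := by
    conv_lhs => rw [← Matrix.updateRow_eq_self B (0 : Fin (n+1)), ← hrow]
    rw [Matrix.det_updateRow_add, Matrix.det_updateRow_smul]
  have hr20 : r2 0 = -(A 0 0) := by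
    simp [hr2, hB00]
  have hr2succ : ∀ j : Fin n, r2 j.succ = B 0 j.succ := by
    intro j
    simp [hr2, Pi.single_eq_of_ne (Fin.succ_ne_zero j) _]
  -- Schur complement for the second piece
  have hdetB2 : (B.updateRow 0 r2).det
      = (-(A 0 0)) * (z • (1 : Matrix (Fin n) (Fin n) ℂ) - Y).det := by
    set A11 : Matrix Unit Unit ℂ := Matrix.of fun _ _ => -(A 0 0) with hA11
    have hdetA11 : A11.det = -(A 0 0) := by
      rw [Matrix.det_unique]; rfl
    haveI : Invertible A11 := A11.invertibleOfIsUnitDet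
      (by rw [hdetA11]; exact (neg_ne_zero.mpr ha_ne).isUnit)
    have hsub : (B.updateRow 0 r2).submatrix (stmt15Equiv n) (stmt15Equiv n)
        = fromBlocks A11 (Matrix.of fun _ j => B 0 (Fin.succ j))
            (Matrix.of fun i _ => B (Fin.succ i) 0) N := by
      ext i j
      cases i with
      | inl u =>
        cases j with
        | inl v =>
          simp [stmt15Equiv, Matrix.updateRow_self, hr20, hA11]
        | inr j =>
          simp [stmt15Equiv, Matrix.updateRow_self, hr2succ j]
      | inr i =>
        cases j with
        | inl v =>
          simp [stmt15Equiv, Matrix.updateRow_ne (Fin.succ_ne_zero i)]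
        | inr j =>
          simp [stmt15Equiv, hN, Matrix.updateRow_ne (Fin.succ_ne_zero i)]
    have hinv11 : (⅟A11 : Matrix Unit Unit ℂ) = Matrix.of fun _ _ => (-(A 0 0))⁻¹ := by
      rw [Matrix.invOf_eq_nonsing_inv, Matrix.inv_def, Matrix.adjugate_subsingleton, hdetA11]
      ext u v
      simp [Ring.inverse_eq_inv', Matrix.one_apply, Subsingleton.elim u v]
    rw [← Matrix.det_submatrix_equiv_self (stmt15Equiv n), hsub, Matrix.det_fromBlocks₁₁,
      hdetA11, hinv11]
    have hmat : N - (Matrix.of fun i _ => B (Fin.succ i) 0 : Matrix (Fin n) Unit ℂ) *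
        (Matrix.of fun _ _ => (-(A 0 0))⁻¹ : Matrix Unit Unit ℂ) *
        (Matrix.of fun _ j => B 0 (Fin.succ j) : Matrix Unit (Fin n) ℂ)
        = z • (1 : Matrix (Fin n) (Fin n) ℂ) - Y := by
      ext i j
      have hCR : ((Matrix.of fun i _ => B (Fin.succ i) 0 : Matrix (Fin n) Unit ℂ) *
          (Matrix.of fun _ _ => (-(A 0 0))⁻¹ : Matrix Unit Unit ℂ) *
          (Matrix.of fun _ j => B 0 (Fin.succ j) : Matrix Unit (Fin n) ℂ)) i j
          = B i.succ 0 * (-(A 0 0))⁻¹ * B 0 j.succ := by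
        simp [Matrix.mul_apply]
      rw [Matrix.sub_apply, hCR, hNij i j, hBsucc0 i, hB0succ j,
        Matrix.sub_apply, Matrix.smul_apply, Matrix.one_apply, hY i j, ← hherm j,
        smul_eq_mul]
      field_simp
      by_cases h : i = j <;> simp [h] <;> ring
    rw [hmat]
  -- the Schur identity
  have hschur : A 0 0 * (z • (1 : Matrix (Fin n) (Fin n) ℂ) - Y).det
      = z * N.det - B.det := by
    rw [hE, hdetB2] at hsplit
    linear_combination hsplit
  -- assembly
  have key : (z • (1 : Matrix (Fin n) (Fin n) ℂ) - Y).det /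
      (z • (1 : Matrix (Fin (n+1)) (Fin (n+1)) ℂ) - D).det
      = (1 / A 0 0) * (z * (∑ i, (γ i : ℂ) / (z - (ν i : ℂ))) - 1) := by
    rw [← hdetB]
    have h1 : A 0 0 * (z • (1 : Matrix (Fin n) (Fin n) ℂ) - Y).det
        = B.det * (z * (∑ i, (γ i : ℂ) / (z - (ν i : ℂ))) - 1) := by
      rw [hschur, hdetN, hW00, hm]
      ring
    field_simp
    linear_combination h1
  refine ⟨key, ?_⟩
  rw [key]
  congr 1
  -- z * ∑ γ/(z-ν) - 1 = ∑ γν/(z-ν)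
  rw [← hγsum]
  rw [Finset.mul_sum, ← Finset.sum_sub_distrib]
  refine Finset.sum_congr rfl fun i _ => ?_
  by_cases hi : ∃ j, lam j = ν i
  · obtain ⟨j, hj⟩ := hi
    have : z - (ν i : ℂ) ≠ 0 := by rw [← hj]; exact sub_ne_zero.mpr (hz j)
    field_simp
    ring
  · have : γ i = 0 := by
      rw [hγ i]
      rw [Finset.filter_false_of_mem, Finset.sum_empty]
      intro j _ h
      exact hi ⟨j, h⟩
    simp [this]
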